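/- arXiv:2411.11583 — 9 statements merged into one kernel-verified Lean document; each statement's English description precedes it below -/
import Mathlib

section
/- For every y ∈ ℝ one has 2 ≤ 𝔅(y) + 𝔅(−y) ≤ 2 + y²/6; moreover, for every y ≠ 0, 𝔅(y) + 𝔅(−y) = y·coth(y/2). -/
/-- The Bernoulli function: `𝔅(y) = y / (exp y - 1)` for `y ≠ 0`, and `𝔅(0) = 1`. -/
noncomputable def Bern (y : ℝ) : ℝ := if y = 0 then 1 else y / (Real.exp y - 1)

/-- The hyperbolic cotangent `coth x = cosh x / sinh x`. -/
noncomputable def coth (x : ℝ) : ℝ := Real.cosh x / Real.sinh x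

/-!
For `y ≠ 0` the two exponentials combine to `𝔅(y) + 𝔅(-y) = y (eʸ + 1)/(eʸ - 1) = 2t coth t` with
`t = y/2`, an even function of `t`. For `t > 0` the bounds `1 ≤ t coth t ≤ 1 + t²/3` are
`sinh t ≤ t cosh t ≤ (1 + t²/3) sinh t`; both differences vanish at `0` and have nonnegative
derivatives `t sinh t` and `(t/3)(t cosh t - sinh t)`, the second by the first inequality.
-/

open Real

theorem nonneg_of_hasDerivAt_nonneg {f f' : ℝ → ℝ} (hf : ∀ x, HasDerivAt f (f' x) x)
    (h₀ : f 0 = 0) (hf' : ∀ x, 0 < x → 0 ≤ f' x) {t : ℝ} (ht : 0 ≤ t) : 0 ≤ f t := by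
  have hmono : MonotoneOn f (Set.Ici 0) :=
    monotoneOn_of_hasDerivWithinAt_nonneg (convex_Ici 0)
      (fun x _ => (hf x).continuousAt.continuousWithinAt) (fun x _ => (hf x).hasDerivWithinAt)
      (by simpa only [interior_Ici, Set.mem_Ioi] using hf')
  simpa only [h₀] using hmono Set.self_mem_Ici ht ht

theorem sinh_le_mul_cosh {t : ℝ} (ht : 0 ≤ t) : sinh t ≤ t * cosh t := by
  have hderiv (x : ℝ) : HasDerivAt (fun t => t * cosh t - sinh t) (x * sinh x) x :=
    (((hasDerivAt_id' x).mul (hasDerivAt_cosh x)).sub (hasDerivAt_sinh x)).congr_deriv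
      (by ring)
  have := nonneg_of_hasDerivAt_nonneg hderiv (by simp)
    (fun x hx => mul_nonneg hx.le (sinh_nonneg_iff.2 hx.le)) ht
  linarith

theorem mul_cosh_le {t : ℝ} (ht : 0 ≤ t) : t * cosh t ≤ (1 + t ^ 2 / 3) * sinh t := by
  have hderiv (x : ℝ) : HasDerivAt (fun t => (1 + t ^ 2 / 3) * sinh t - t * cosh t)
      (x / 3 * (x * cosh x - sinh x)) x := by
    have hpoly : HasDerivAt (fun t : ℝ => 1 + t ^ 2 / 3) (2 * x / 3) x :=
      (((hasDerivAt_pow 2 x).div_const 3).const_add 1).congr_deriv (by ring)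
    exact ((hpoly.mul (hasDerivAt_sinh x)).sub ((hasDerivAt_id' x).mul (hasDerivAt_cosh x)))
      |>.congr_deriv (by ring)
  have := nonneg_of_hasDerivAt_nonneg hderiv (by simp)
    (fun x hx => mul_nonneg (by positivity) (sub_nonneg.2 (sinh_le_mul_cosh hx.le))) ht
  linarith

theorem coth_neg (x : ℝ) : coth (-x) = -coth x := by
  rw [coth, coth, cosh_neg, sinh_neg, div_neg]

theorem abs_mul_coth_abs (x : ℝ) : |x| * coth |x| = x * coth x := by
  rcases abs_cases x with ⟨h, -⟩ | ⟨h, -⟩ <;> rw [h]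
  rw [coth_neg, neg_mul_neg]

theorem one_le_mul_coth {t : ℝ} (ht : 0 < t) : 1 ≤ t * coth t := by
  rw [coth, ← mul_div_assoc, one_le_div (sinh_pos_iff.2 ht)]
  exact sinh_le_mul_cosh ht.le

theorem mul_coth_le {t : ℝ} (ht : 0 < t) : t * coth t ≤ 1 + t ^ 2 / 3 := by
  rw [coth, ← mul_div_assoc, div_le_iff₀ (sinh_pos_iff.2 ht)]
  exact mul_cosh_le ht.le

-- At `x = 0` both sides are `0`, by the convention `a / 0 = 0`.
theorem coth_half (x : ℝ) : coth (x / 2) = (exp x + 1) / (exp x - 1) := by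
  have hexp : exp x = exp (x / 2) * exp (x / 2) := by rw [← exp_add, add_halves]
  rw [coth, cosh_eq, sinh_eq, div_div_div_cancel_right₀ two_ne_zero, exp_neg, hexp,
    ← mul_div_mul_left _ _ (exp_pos (x / 2)).ne']
  congr 1 <;> field_simp

theorem bern_add_bern_neg {y : ℝ} (hy : y ≠ 0) : Bern y + Bern (-y) = y * coth (y / 2) := by
  have hexp : exp y ≠ 1 := fun h => hy (exp_eq_one_iff y |>.1 h)
  have h₁ : exp y - 1 ≠ 0 := sub_ne_zero.2 hexp
  have h₂ : 1 - exp y ≠ 0 := sub_ne_zero.2 (Ne.symm hexp)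
  rw [Bern, Bern, if_neg hy, if_neg (neg_ne_zero.2 hy), coth_half, exp_neg]
  field_simp
  ring

/-- For every `y ∈ ℝ`, `2 ≤ 𝔅(y) + 𝔅(−y) ≤ 2 + y²/6`; moreover for `y ≠ 0`,
`𝔅(y) + 𝔅(−y) = y·coth(y/2)`. -/
theorem bernoulli_sum_bounds (y : ℝ) :
    2 ≤ Bern y + Bern (-y) ∧ Bern y + Bern (-y) ≤ 2 + y ^ 2 / 6 ∧
      (y ≠ 0 → Bern y + Bern (-y) = y * coth (y / 2)) := by
  rcases eq_or_ne y 0 with rfl | hy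
  · norm_num [Bern]
  have hsum : Bern y + Bern (-y) = 2 * (|y / 2| * coth |y / 2|) := by
    rw [bern_add_bern_neg hy, abs_mul_coth_abs]; ring
  have ht : 0 < |y / 2| := abs_pos.2 (div_ne_zero hy two_ne_zero)
  have hsq : |y / 2| ^ 2 = y ^ 2 / 4 := by rw [sq_abs]; ring
  refine ⟨?_, ?_, fun _ => bern_add_bern_neg hy⟩
  · linarith [one_le_mul_coth ht]
  · linarith [mul_coth_le ht]
end

section
/- Let z, φ_K, φ_L, u_K, u_L ∈ ℝ and v_K, v_L > 0, and set w_K = (u_K/v_K)·exp(z·φ_K) and w_L = (u_L/v_L)·exp(z·φ_L). Then u_K·v_L·𝔅(z(φ_L − φ_K)) − u_L·v_K·𝔅(z(φ_K − φ_L)) = v_K·v_L·𝔐(exp(−z·φ_K), exp(−z·φ_L))·(w_K − w_L). -/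
/-- The mean `𝔐(p,q) = (log(1/p) − log(1/q))/(1/p − 1/q)` for `p ≠ q`, `𝔐(p,p) = p`. -/
noncomputable def Mmean (p q : ℝ) : ℝ :=
  if p = q then p else (Real.log (1 / p) - Real.log (1 / q)) / (1 / p - 1 / q)

/-!
Writing `a = z φ_K`, `b = z φ_L` and `M = 𝔐(e^{-a}, e^{-b})`, one has `M = (a - b)/(e^a - e^b)`
for `a ≠ b`, hence `𝔅(b - a) = e^a M` and `𝔅(a - b) = e^b M` (both sides being `1` when `a = b`).
The flux is therefore `M (u_K v_L e^a - u_L v_K e^b) = v_K v_L M (w_K - w_L)`.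
-/

open Real

theorem Mmean_comm (p q : ℝ) : Mmean p q = Mmean q p := by
  unfold Mmean
  by_cases hpq : p = q
  · simp only [hpq]
  · rw [if_neg hpq, if_neg (Ne.symm hpq), ← neg_sub, ← neg_sub (1 / q), neg_div_neg_eq]

theorem Mmean_exp_neg_of_ne {a b : ℝ} (hab : a ≠ b) :
    Mmean (exp (-a)) (exp (-b)) = (a - b) / (exp a - exp b) := by
  have hne : exp (-a) ≠ exp (-b) := fun h => hab (neg_injective (exp_injective h))
  simp only [Mmean, if_neg hne, one_div, ← exp_neg, neg_neg, log_exp]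

theorem Bern_sub_eq_exp_mul_Mmean (a b : ℝ) :
    Bern (b - a) = exp a * Mmean (exp (-a)) (exp (-b)) := by
  by_cases hab : a = b
  · subst hab
    simp [Bern, Mmean, ← exp_add]
  · have hba : b - a ≠ 0 := sub_ne_zero.mpr (Ne.symm hab)
    have hexp : exp a - exp b ≠ 0 := sub_ne_zero.mpr (exp_injective.ne hab)
    have hexp' : exp b - exp a ≠ 0 := sub_ne_zero.mpr (exp_injective.ne (Ne.symm hab))
    rw [Bern, if_neg hba, Mmean_exp_neg_of_ne hab, exp_sub]
    field_simp
    ring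

/-- Reformulation of the discrete flux in terms of the Slotboom variables
`w_K = (u_K/v_K)·exp(z·φ_K)` and `w_L = (u_L/v_L)·exp(z·φ_L)`. -/
theorem flux_slotboom_reformulation (z φK φL uK uL vK vL : ℝ)
    (hvK : 0 < vK) (hvL : 0 < vL) (wK wL : ℝ)
    (hwK : wK = uK / vK * Real.exp (z * φK)) (hwL : wL = uL / vL * Real.exp (z * φL)) :
    uK * vL * Bern (z * (φL - φK)) - uL * vK * Bern (z * (φK - φL)) =
      vK * vL * Mmean (Real.exp (-(z * φK))) (Real.exp (-(z * φL))) * (wK - wL) := by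
  rw [mul_sub, mul_sub, Bern_sub_eq_exp_mul_Mmean, Bern_sub_eq_exp_mul_Mmean,
    Mmean_comm (exp _), hwK, hwL]
  field_simp
end

section
/- Let u_K, u_L, v_K, v_L > 0, z, φ_K, φ_L ∈ ℝ, and a > 0, D > 0. Set F = a·D·(u_K·v_L·𝔅(z(φ_L − φ_K)) − u_L·v_K·𝔅(z(φ_K − φ_L))), μ_K = log(u_K/v_K) + z·φ_K and μ_L = log(u_L/v_L) + z·φ_L. Then F·(μ_K − μ_L) ≥ 0, with equality if and only if μ_K = μ_L. -/
/-!
With `s = z (φ_L - φ_K)`, the symmetry `𝔅(-s) = eˢ 𝔅(s)` turns the flux into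
`F = a D 𝔅(s) (x - y)` with `x = u_K v_L`, `y = u_L v_K eˢ`, while `μ_K - μ_L = log x - log y`.
So `F (μ_K - μ_L)` is the positive multiple `a D 𝔅(s)` of `(x - y) (log x - log y)`, which is
nonnegative and vanishes only at `x = y` because `log` is strictly increasing.
-/

open Real

section StrictMonoOn

variable {R : Type*} [Ring R] [LinearOrder R] [IsStrictOrderedRing R] {f : R → R} {s : Set R}
  {x y : R}

theorem StrictMonoOn.sub_mul_sub_pos (hf : StrictMonoOn f s) (hx : x ∈ s) (hy : y ∈ s)
    (hxy : x ≠ y) : 0 < (x - y) * (f x - f y) := by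
  rcases hxy.lt_or_gt with h | h
  · exact mul_pos_of_neg_of_neg (sub_neg.2 h) (sub_neg.2 (hf hx hy h))
  · exact mul_pos (sub_pos.2 h) (sub_pos.2 (hf hy hx h))

theorem StrictMonoOn.sub_mul_sub_nonneg (hf : StrictMonoOn f s) (hx : x ∈ s) (hy : y ∈ s) :
    0 ≤ (x - y) * (f x - f y) := by
  rcases eq_or_ne x y with rfl | hxy
  · simp
  · exact (hf.sub_mul_sub_pos hx hy hxy).le

theorem StrictMonoOn.sub_mul_sub_eq_zero_iff (hf : StrictMonoOn f s) (hx : x ∈ s) (hy : y ∈ s) :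
    (x - y) * (f x - f y) = 0 ↔ x = y := by
  refine ⟨fun h => by_contra fun hxy => (hf.sub_mul_sub_pos hx hy hxy).ne' h, ?_⟩
  rintro rfl
  simp

end StrictMonoOn

theorem Bern_pos (y : ℝ) : 0 < Bern y := by
  unfold Bern
  split_ifs with hy
  · exact one_pos
  · rcases Ne.lt_or_gt hy with hy | hy
    · exact div_pos_of_neg_of_neg hy (sub_neg.2 (exp_lt_one_iff.2 hy))
    · exact div_pos hy (sub_pos.2 (one_lt_exp_iff.2 hy))

theorem Bern_neg (y : ℝ) : Bern (-y) = exp y * Bern y := by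
  rcases eq_or_ne y 0 with rfl | hy
  · simp [Bern]
  have hexp : exp y - 1 ≠ 0 := sub_ne_zero.2 ((exp_eq_one_iff y).not.2 hy)
  have hexp' : 1 - exp y ≠ 0 := sub_ne_zero.2 (Ne.symm ((exp_eq_one_iff y).not.2 hy))
  rw [Bern, Bern, if_neg (neg_ne_zero.2 hy), if_neg hy, exp_neg]
  field_simp
  ring

/-- The edge dissipation `F·(μ_K − μ_L)` is nonnegative, and vanishes iff `μ_K = μ_L`. -/
theorem flux_dissipation_nonneg (z φK φL uK uL vK vL a D : ℝ)
    (huK : 0 < uK) (huL : 0 < uL) (hvK : 0 < vK) (hvL : 0 < vL)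
    (ha : 0 < a) (hD : 0 < D) (F μK μL : ℝ)
    (hF : F = a * D * (uK * vL * Bern (z * (φL - φK)) - uL * vK * Bern (z * (φK - φL))))
    (hμK : μK = Real.log (uK / vK) + z * φK)
    (hμL : μL = Real.log (uL / vL) + z * φL) :
    0 ≤ F * (μK - μL) ∧ (F * (μK - μL) = 0 ↔ μK = μL) := by
  set s := z * (φL - φK)
  set x := uK * vL
  set y := uL * vK * exp s
  have hx : 0 < x := by positivity
  have hy : 0 < y := by positivity
  have hC : 0 < a * D * Bern s := mul_pos (mul_pos ha hD) (Bern_pos s)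
  have hflux : F = a * D * Bern s * (x - y) := by
    rw [hF, show z * (φK - φL) = -s by ring, Bern_neg]
    ring
  have hpotential : μK - μL = log x - log y := by
    rw [hμK, hμL, log_div huK.ne' hvK.ne', log_div huL.ne' hvL.ne', log_mul huK.ne' hvL.ne',
      log_mul (by positivity) (exp_pos s).ne', log_mul huL.ne' hvK.ne', log_exp]
    ring
  rw [← sub_eq_zero (a := μK), hflux, hpotential, mul_assoc, mul_nonneg_iff_of_pos_left hC,
    mul_eq_zero, or_iff_right hC.ne', strictMonoOn_log.sub_mul_sub_eq_zero_iff hx hy, sub_eq_zero,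
    log_injOn_pos.eq_iff hx hy]
  exact ⟨strictMonoOn_log.sub_mul_sub_nonneg hx hy, Iff.rfl⟩
end

section
/- For every integer I ≥ 1, the function H* : ℝ^I → ℝ defined by H*(r_1,…,r_I) = log(1 + Σ_{i=1}^I exp(r_i)) is strictly convex. -/
/-!
Adjoin the constant term as a coordinate fixed at `0` (the index `none` of `Option (Fin I)`), so
that `H*` becomes log-sum-exp. For `A = ∑ exp uᵢ`, `B = ∑ exp vᵢ`, each term `exp (a uᵢ + b vᵢ)`
equals `AᵃBᵇ · exp (a (uᵢ - log A) + b (vᵢ - log B))`, which convexity of `exp` bounds by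
`AᵃBᵇ (a exp uᵢ / A + b exp vᵢ / B)`. These bounds add up to exactly `AᵃBᵇ`, and one of them is
strict unless `uᵢ - vᵢ` is constant; since the fixed coordinate gives `0`, that means `x = y`.
-/

open Real Finset

lemma exp_mul_add_mul_le_rescaled {a b A B : ℝ} (ha : 0 ≤ a) (hb : 0 ≤ b) (hab : a + b = 1)
    (hA : 0 < A) (hB : 0 < B) (s t : ℝ) :
    exp (a * s + b * t) ≤ exp (a * log A + b * log B) * (a * (exp s / A) + b * (exp t / B)) := by
  have hconv := convexOn_exp.2 (Set.mem_univ (s - log A)) (Set.mem_univ (t - log B)) ha hb hab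
  simp only [smul_eq_mul, exp_sub, exp_log hA, exp_log hB] at hconv
  calc exp (a * s + b * t)
      = exp (a * log A + b * log B) * exp (a * (s - log A) + b * (t - log B)) := by
        rw [← exp_add]; ring_nf
    _ ≤ _ := by gcongr

lemma exp_mul_add_mul_lt_rescaled {a b A B s t : ℝ} (ha : 0 < a) (hb : 0 < b) (hab : a + b = 1)
    (hA : 0 < A) (hB : 0 < B) (hst : s - log A ≠ t - log B) :
    exp (a * s + b * t) < exp (a * log A + b * log B) * (a * (exp s / A) + b * (exp t / B)) := by
  have hconv := strictConvexOn_exp.2 (Set.mem_univ (s - log A)) (Set.mem_univ (t - log B)) hst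
    ha hb hab
  simp only [smul_eq_mul, exp_sub, exp_log hA, exp_log hB] at hconv
  calc exp (a * s + b * t)
      = exp (a * log A + b * log B) * exp (a * (s - log A) + b * (t - log B)) := by
        rw [← exp_add]; ring_nf
    _ < _ := by gcongr

lemma log_sum_exp_lt {ι : Type*} [Fintype ι] [Nonempty ι] {u v : ι → ℝ}
    (huv : ∃ i j, u i - v i ≠ u j - v j) {a b : ℝ} (ha : 0 < a) (hb : 0 < b) (hab : a + b = 1) :
    log (∑ i, exp (a * u i + b * v i)) < a * log (∑ i, exp (u i)) + b * log (∑ i, exp (v i)) := by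
  set A := ∑ i, exp (u i)
  set B := ∑ i, exp (v i)
  have hA : 0 < A := by positivity
  have hB : 0 < B := by positivity
  obtain ⟨k, hk⟩ : ∃ k, u k - log A ≠ v k - log B := by
    by_contra! h
    obtain ⟨i, j, hij⟩ := huv
    exact hij (by linarith [h i, h j])
  have hsum : ∑ i, exp (a * log A + b * log B) * (a * (exp (u i) / A) + b * (exp (v i) / B))
      = exp (a * log A + b * log B) := by
    simp only [← Finset.mul_sum, Finset.sum_add_distrib, ← Finset.sum_div]
    rw [show (∑ i, exp (u i)) / A = 1 from div_self hA.ne',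
      show (∑ i, exp (v i)) / B = 1 from div_self hB.ne', mul_one, mul_one, hab, mul_one]
  rw [log_lt_iff_lt_exp (by positivity), ← hsum]
  exact Finset.sum_lt_sum (fun i _ => exp_mul_add_mul_le_rescaled ha.le hb.le hab hA hB _ _)
    ⟨k, Finset.mem_univ k, exp_mul_add_mul_lt_rescaled ha hb hab hA hB hk⟩

lemma one_add_sum_exp_eq_sum_option {ι : Type*} [Fintype ι] (R : ι → ℝ) :
    1 + ∑ i, exp (R i) = ∑ o : Option ι, exp (o.elim 0 R) := by
  simp [Fintype.sum_option]

theorem legendre_entropy_strictConvex_general (I : ℕ) :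
    StrictConvexOn ℝ Set.univ
      (fun R : Fin I → ℝ => Real.log (1 + ∑ i, Real.exp (R i))) := by
  refine ⟨convex_univ, fun x _ y _ hxy a b ha hb hab => ?_⟩
  obtain ⟨j, hj⟩ := Function.ne_iff.1 hxy
  have hdiff : ∃ o o' : Option (Fin I), o.elim 0 x - o.elim 0 y ≠ o'.elim 0 x - o'.elim 0 y :=
    ⟨none, some j, by simpa [sub_eq_zero, eq_comm] using hj⟩
  have hcomb : ∀ o : Option (Fin I),
      o.elim 0 (a • x + b • y) = a * o.elim 0 x + b * o.elim 0 y := by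
    rintro (_ | i) <;> simp
  simp only [one_add_sum_exp_eq_sum_option, hcomb, smul_eq_mul]
  exact log_sum_exp_lt hdiff ha hb hab

/-- For every integer `I ≥ 1`, the function
`H*(r₁,…,r_I) = log(1 + Σᵢ exp rᵢ)` is strictly convex on `ℝ^I`. -/
theorem legendre_entropy_strictConvex (I : ℕ) (hI : 1 ≤ I) :
    StrictConvexOn ℝ Set.univ
      (fun R : Fin I → ℝ => Real.log (1 + ∑ i, Real.exp (R i))) :=
  legendre_entropy_strictConvex_general I
end

section
/- Let I ≥ 1 and let (a_i)_{0≤i≤I} and (b_i)_{0≤i≤I} be nonnegative real numbers with Σ_{i=0}^I a_i = 1 and Σ_{i=0}^I b_i = 1. Then Σ_{i=1}^I (√(a_i·a_0) − √(b_i·b_0))² ≥ (√a_0 − √b_0)² − (a_0 − b_0)². -/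
/-!
Expanding the squares, the right-hand side equals
`a₀(1 - a₀) + b₀(1 - b₀) - 2√(a₀b₀) · Σ_{i≥1} √(aᵢbᵢ)`. By Cauchy–Schwarz the Bhattacharyya
coefficient `Σ_{i=0}^I √(aᵢbᵢ)` is at most `1`, i.e. `Σ_{i≥1} √(aᵢbᵢ) ≤ 1 - √(a₀b₀)`, and
substituting this bound yields exactly the left-hand side.
-/

open Real Finset

theorem Finset.sum_range_succ_eq_add_sum_Icc_one {M : Type*} [AddCommMonoid M] (f : ℕ → M)
    (n : ℕ) : ∑ i ∈ range (n + 1), f i = f 0 + ∑ i ∈ Icc 1 n, f i := by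
  rw [Nat.range_succ_eq_Icc_zero, ← insert_Icc_add_one_left_eq_Icc n.zero_le, zero_add,
    sum_insert (by simp)]

theorem Real.sq_sqrt_mul_sub_sqrt_mul {u v x y : ℝ} (hu : 0 ≤ u) (hv : 0 ≤ v) (hx : 0 ≤ x)
    (hy : 0 ≤ y) :
    (√(u * x) - √(v * y)) ^ 2 = u * x + v * y - 2 * (√u * √v) * (√x * √y) := by
  rw [sub_sq, sq_sqrt (mul_nonneg hu hx), sq_sqrt (mul_nonneg hv hy), sqrt_mul hu,
    sqrt_mul hv]
  ring

theorem Real.sum_sqrt_mul_sqrt_le_one {ι : Type*} {s : Finset ι} {f g : ι → ℝ}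
    (hf : ∀ i ∈ s, 0 ≤ f i) (hg : ∀ i ∈ s, 0 ≤ g i) (hsf : ∑ i ∈ s, f i = 1)
    (hsg : ∑ i ∈ s, g i = 1) : ∑ i ∈ s, √(f i) * √(g i) ≤ 1 := by
  have hsqf : ∑ i ∈ s, √(f i) ^ 2 = 1 := (sum_congr rfl fun i hi ↦ sq_sqrt (hf i hi)).trans hsf
  have hsqg : ∑ i ∈ s, √(g i) ^ 2 = 1 := (sum_congr rfl fun i hi ↦ sq_sqrt (hg i hi)).trans hsg
  simpa [hsqf, hsqg] using sum_mul_le_sqrt_mul_sqrt s (fun i ↦ √(f i)) (fun i ↦ √(g i))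

theorem sqrt_sum_lower_bound_general (I : ℕ) (a b : ℕ → ℝ)
    (ha : ∀ i ≤ I, 0 ≤ a i) (hb : ∀ i ≤ I, 0 ≤ b i)
    (hsa : ∑ i ∈ Finset.range (I + 1), a i = 1)
    (hsb : ∑ i ∈ Finset.range (I + 1), b i = 1) :
    (Real.sqrt (a 0) - Real.sqrt (b 0)) ^ 2 - (a 0 - b 0) ^ 2 ≤
      ∑ i ∈ Finset.Icc 1 I, (Real.sqrt (a i * a 0) - Real.sqrt (b i * b 0)) ^ 2 := by
  have ha0 := ha 0 I.zero_le
  have hb0 := hb 0 I.zero_le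
  have hbhat : √(a 0) * √(b 0) + ∑ i ∈ Icc 1 I, √(a i) * √(b i) ≤ 1 := by
    rw [← sum_range_succ_eq_add_sum_Icc_one (fun i ↦ √(a i) * √(b i))]
    exact sum_sqrt_mul_sqrt_le_one (fun i hi ↦ ha i (mem_range_succ_iff.1 hi))
      (fun i hi ↦ hb i (mem_range_succ_iff.1 hi)) hsa hsb
  rw [sum_range_succ_eq_add_sum_Icc_one] at hsa hsb
  have hexpand : ∑ i ∈ Icc 1 I, (√(a i * a 0) - √(b i * b 0)) ^ 2 =
      (∑ i ∈ Icc 1 I, a i) * a 0 + (∑ i ∈ Icc 1 I, b i) * b 0 -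
        2 * (∑ i ∈ Icc 1 I, √(a i) * √(b i)) * (√(a 0) * √(b 0)) := by
    rw [sum_congr rfl fun i hi ↦ sq_sqrt_mul_sub_sqrt_mul (ha i (mem_Icc.1 hi).2)
      (hb i (mem_Icc.1 hi).2) ha0 hb0]
    simp only [sum_sub_distrib, sum_add_distrib, sum_mul, mul_sum]
  rw [hexpand]
  nlinarith [mul_le_mul_of_nonneg_right hbhat (by positivity : 0 ≤ √(a 0) * √(b 0)),
    sq_sqrt ha0, sq_sqrt hb0]

/-- If `(aᵢ)` and `(bᵢ)`, `0 ≤ i ≤ I`, are nonnegative with unit sums, then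
`Σ_{i=1}^I (√(aᵢ·a₀) − √(bᵢ·b₀))² ≥ (√a₀ − √b₀)² − (a₀ − b₀)²`. -/
theorem sqrt_sum_lower_bound (I : ℕ) (hI : 1 ≤ I) (a b : ℕ → ℝ)
    (ha : ∀ i ≤ I, 0 ≤ a i) (hb : ∀ i ≤ I, 0 ≤ b i)
    (hsa : ∑ i ∈ Finset.range (I + 1), a i = 1)
    (hsb : ∑ i ∈ Finset.range (I + 1), b i = 1) :
    (Real.sqrt (a 0) - Real.sqrt (b 0)) ^ 2 - (a 0 - b 0) ^ 2 ≤
      ∑ i ∈ Finset.Icc 1 I, (Real.sqrt (a i * a 0) - Real.sqrt (b i * b 0)) ^ 2 :=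
  sqrt_sum_lower_bound_general I a b ha hb hsa hsb
end

section
/- For all real numbers a, c ∈ [0,1] and b, d ≥ 0, (a·√b − c·√d)² ≤ 3·((√(a·b) − √(c·d))² + (√b − √d)² + (√(a·d) − √(b·c))²). -/
/-!
Write `a = p²`, `c = r²`, `q = √b`, `s = √d`, so that the three differences on the right are
`x = pq - rs`, `y = q - s`, `z = ps - qr`. Then `p²q - r²s = p x + r² y + r z`, and Cauchy–Schwarz
bounds its square by `(p² + r⁴ + r²)(x² + y² + z²)`, where `p² + r⁴ + r² ≤ 3` because `p², r² ≤ 1`.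
-/

theorem mul_add_mul_add_mul_sq_le {R : Type*} [CommRing R] [LinearOrder R] [IsStrictOrderedRing R]
    (u₁ u₂ u₃ x₁ x₂ x₃ : R) :
    (u₁ * x₁ + u₂ * x₂ + u₃ * x₃) ^ 2 ≤
      (u₁ ^ 2 + u₂ ^ 2 + u₃ ^ 2) * (x₁ ^ 2 + x₂ ^ 2 + x₃ ^ 2) := by
  simpa [Fin.sum_univ_three] using
    Finset.sum_mul_sq_le_sq_mul_sq Finset.univ ![u₁, u₂, u₃] ![x₁, x₂, x₃]

theorem sq_mul_sub_sq_mul_sq_le {R : Type*} [CommRing R] [LinearOrder R] [IsStrictOrderedRing R]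
    (p q r s : R) (hp : p ^ 2 ≤ 1) (hr : r ^ 2 ≤ 1) :
    (p ^ 2 * q - r ^ 2 * s) ^ 2 ≤
      3 * ((p * q - r * s) ^ 2 + (q - s) ^ 2 + (p * s - q * r) ^ 2) := by
  have hcoeff : p ^ 2 + (r ^ 2) ^ 2 + r ^ 2 ≤ 3 := by nlinarith
  calc (p ^ 2 * q - r ^ 2 * s) ^ 2
      = (p * (p * q - r * s) + r ^ 2 * (q - s) + r * (p * s - q * r)) ^ 2 := by ring
    _ ≤ (p ^ 2 + (r ^ 2) ^ 2 + r ^ 2) * ((p * q - r * s) ^ 2 + (q - s) ^ 2 + (p * s - q * r) ^ 2) :=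
      mul_add_mul_add_mul_sq_le ..
    _ ≤ 3 * ((p * q - r * s) ^ 2 + (q - s) ^ 2 + (p * s - q * r) ^ 2) :=
      mul_le_mul_of_nonneg_right hcoeff (by positivity)

theorem three_term_sqrt_bound_general (a b c d : ℝ)
    (ha0 : 0 ≤ a) (ha1 : a ≤ 1) (hc0 : 0 ≤ c) (hc1 : c ≤ 1) :
    (a * Real.sqrt b - c * Real.sqrt d) ^ 2 ≤
      3 * ((Real.sqrt (a * b) - Real.sqrt (c * d)) ^ 2 +
        (Real.sqrt b - Real.sqrt d) ^ 2 +
        (Real.sqrt (a * d) - Real.sqrt (b * c)) ^ 2) := by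
  have hp : √a ^ 2 ≤ 1 := by rwa [Real.sq_sqrt ha0]
  have hr : √c ^ 2 ≤ 1 := by rwa [Real.sq_sqrt hc0]
  have key := sq_mul_sub_sq_mul_sq_le (√a) (√b) (√c) (√d) hp hr
  rwa [Real.sq_sqrt ha0, Real.sq_sqrt hc0, ← Real.sqrt_mul ha0, ← Real.sqrt_mul hc0,
    ← Real.sqrt_mul ha0, ← Real.sqrt_mul' b hc0] at key

/-- For `a, c ∈ [0,1]` and `b, d ≥ 0`:
`(a·√b − c·√d)² ≤ 3·((√(a·b) − √(c·d))² + (√b − √d)² + (√(a·d) − √(b·c))²)`. -/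
theorem three_term_sqrt_bound (a b c d : ℝ)
    (ha0 : 0 ≤ a) (ha1 : a ≤ 1) (hc0 : 0 ≤ c) (hc1 : c ≤ 1)
    (hb : 0 ≤ b) (hd : 0 ≤ d) :
    (a * Real.sqrt b - c * Real.sqrt d) ^ 2 ≤
      3 * ((Real.sqrt (a * b) - Real.sqrt (c * d)) ^ 2 +
        (Real.sqrt b - Real.sqrt d) ^ 2 +
        (Real.sqrt (a * d) - Real.sqrt (b * c)) ^ 2) :=
  three_term_sqrt_bound_general a b c d ha0 ha1 hc0 hc1
end

section
/- Let u^{n−1} and u^n be families of volume fractions (u^{n−1}_i, u^n_i : 𝒯 → ℝ for 1 ≤ i ≤ I) and φ : 𝒯 → ℝ a potential such that for every species 1 ≤ i ≤ I and every cell K ∈ 𝒯, m_K·(u^n_i(K) − u^{n−1}_i(K)) + τ·Σ_{L∈𝒯} F^n_i(K,L) = 0, where F^n_i is the discrete flux associated with u^n and φ. Then for every 0 ≤ i ≤ I one has Σ_{K∈𝒯} m_K·u^n_i(K) = Σ_{K∈𝒯} m_K·u^{n−1}_i(K), where u^n_0 := 1 − Σ_{i=1}^I u^n_i and u^{n−1}_0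 := 1 − Σ_{i=1}^I u^{n−1}_i. -/
/-!
The flux `Fᵢ(K,L) = a(K,L) Dᵢ (X(K,L) − X(L,K))` is antisymmetric because `a` is symmetric, so the
fluxes cancel in pairs when the scheme is summed over all cells. The solvent's mass is the total
cell measure minus the masses of the other species, hence it is conserved as well.
-/

open Finset

theorem Finset.sum_sum_eq_zero_of_antisymm {ι G : Type*} [AddCommGroup G] [IsAddTorsionFree G]
    (s : Finset ι) {f : ι → ι → G} (hf : ∀ i j, f i j = -f j i) :
    ∑ i ∈ s, ∑ j ∈ s, f i j = 0 := by
  refine self_eq_neg.mp ?_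
  calc ∑ i ∈ s, ∑ j ∈ s, f i j = ∑ j ∈ s, ∑ i ∈ s, f i j := sum_comm
    _ = -∑ j ∈ s, ∑ i ∈ s, f j i := by
      simp only [← sum_neg_distrib]
      exact sum_congr rfl fun j _ => sum_congr rfl fun i _ => hf i j

theorem mul_sub_swap_eq_neg_of_symm {ι R : Type*} [CommRing R] {a : ι → ι → R}
    (ha : ∀ i j, a i j = a j i) (c : R) (g : ι → ι → R) (i j : ι) :
    a i j * c * (g i j - g j i) = -(a j i * c * (g j i - g i j)) := by
  rw [ha i j]
  ring

theorem sum_mul_eq_of_balance {ι R : Type*} [Fintype ι] [CommRing R] [IsAddTorsionFree R]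
    (m u v : ι → R) (τ : R) {F : ι → ι → R} (hF : ∀ K L, F K L = -F L K)
    (hbalance : ∀ K, m K * (u K - v K) + τ * ∑ L, F K L = 0) :
    ∑ K, m K * u K = ∑ K, m K * v K := by
  have hsum : ∑ K, (m K * (u K - v K) + τ * ∑ L, F K L) = 0 :=
    sum_eq_zero fun K _ => hbalance K
  rw [sum_add_distrib, ← mul_sum, sum_sum_eq_zero_of_antisymm _ hF, mul_zero, add_zero] at hsum
  simp only [mul_sub, sum_sub_distrib] at hsum
  exact sub_eq_zero.mp hsum

theorem sum_mul_one_sub_sum_eq {ι κ R : Type*} [Fintype ι] [Fintype κ] [CommRing R]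
    (m : ι → R) {u v : κ → ι → R} (h : ∀ i, ∑ K, m K * u i K = ∑ K, m K * v i K) :
    ∑ K, m K * (1 - ∑ i, u i K) = ∑ K, m K * (1 - ∑ i, v i K) := by
  simp only [mul_sub, mul_one, mul_sum, sum_sub_distrib]
  rw [sum_comm (f := fun K i => m K * u i K), sum_comm (f := fun K i => m K * v i K)]
  simp only [h]

theorem discrete_mass_conservation_general
    (T : Type*) [Fintype T]
    (m : T → ℝ)
    (a : T → T → ℝ) (hsym : ∀ K L, a K L = a L K)
    (I : ℕ) (D z : Fin I → ℝ)
    (τ : ℝ)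
    (up un : Fin I → T → ℝ) (φ : T → ℝ)
    (F : Fin I → T → T → ℝ)
    (hF : ∀ i K L, F i K L = a K L * D i *
      (un i K * (1 - ∑ j, un j L) * Bern (z i * (φ L - φ K)) -
        un i L * (1 - ∑ j, un j K) * Bern (z i * (φ K - φ L))))
    (hscheme : ∀ i K, m K * (un i K - up i K) + τ * ∑ L, F i K L = 0) :
    (∀ i, ∑ K, m K * un i K = ∑ K, m K * up i K) ∧
    ∑ K, m K * (1 - ∑ i, un i K) = ∑ K, m K * (1 - ∑ i, up i K) := by
  have hanti : ∀ i K L, F i K L = -F i L K := fun i K L => by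
    rw [hF, hF]
    exact mul_sub_swap_eq_neg_of_symm hsym (D i)
      (fun K L => un i K * (1 - ∑ j, un j L) * Bern (z i * (φ L - φ K))) K L
  have hspecies : ∀ i, ∑ K, m K * un i K = ∑ K, m K * up i K := fun i =>
    sum_mul_eq_of_balance m (un i) (up i) τ (hanti i) (hscheme i)
  exact ⟨hspecies, sum_mul_one_sub_sum_eq m hspecies⟩

/-- Discrete mass conservation: if the backward Euler finite volume scheme
`m_K·(uⁿᵢ(K) − uⁿ⁻¹ᵢ(K)) + τ·Σ_L Fⁿᵢ(K,L) = 0` holds, then the total mass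
`Σ_K m_K·uⁿᵢ(K)` of every species `0 ≤ i ≤ I` (including the solvent
`u₀ = 1 − Σᵢ uᵢ`) is conserved. -/
theorem discrete_mass_conservation
    (T : Type*) [Fintype T] [Nonempty T]
    (m : T → ℝ) (hm : ∀ K, 0 < m K)
    (a : T → T → ℝ) (hsym : ∀ K L, a K L = a L K)
    (hnn : ∀ K L, 0 ≤ a K L) (hdiag : ∀ K, a K K = 0)
    (I : ℕ) (hI : 1 ≤ I) (D z : Fin I → ℝ) (hD : ∀ i, 0 < D i)
    (τ : ℝ) (hτ : 0 < τ)
    (up un : Fin I → T → ℝ) (φ : T → ℝ)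
    (F : Fin I → T → T → ℝ)
    (hF : ∀ i K L, F i K L = a K L * D i *
      (un i K * (1 - ∑ j, un j L) * Bern (z i * (φ L - φ K)) -
        un i L * (1 - ∑ j, un j K) * Bern (z i * (φ K - φ L))))
    (hscheme : ∀ i K, m K * (un i K - up i K) + τ * ∑ L, F i K L = 0) :
    (∀ i, ∑ K, m K * un i K = ∑ K, m K * up i K) ∧
    ∑ K, m K * (1 - ∑ i, un i K) = ∑ K, m K * (1 - ∑ i, up i K) :=
  discrete_mass_conservation_general T m a hsym I D z τ up un φ F hF hscheme
end

section
/- Assume the graph on 𝒯 with edge set {(K,L) : a(K,L) > 0} is connected and that b_K > 0 for at least one K ∈ 𝒯. Then the functional Ψ : ℝ^𝒯 × ℝ^I → ℝ defined by Ψ(y, ξ) = (λ²/4)·Σ_{K,L} a(K,L)·(y_K − y_L)² + (λ²/2)·Σ_K b_K·(y_K − g_K)² + Σ_K m_K·log(1 + Σ_{i=1}^I exp(ξ_i − z_i·y_K)) − Σ_K m_K·(f(K)·y_K + Σ_{i=1}^I ξ_i·c_i(K)) is strictly convex; in particular, Ψ admits at most one minimizer. -/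
/-!
In the coordinates `(y, w)` with `w K i = ξ i - z i * y K`, an injective linear image of `(y, ξ)`,
`Ψ` is the Dirichlet energy of `y`, plus a positively weighted sum over the cells of the
strictly convex function `w ↦ log (1 + ∑ i, exp (w i))` applied to `w K`, minus a linear
functional. The energy is a strictly convex quadratic: its quadratic part vanishes only on
functions that are constant along the edges of the connected graph, and a positive Dirichlet
weight forces the constant to be `0`. The function `log (1 + ∑ exp)` is log-sum-exp with one
coordinate frozen at `0`, which destroys the only flat direction of log-sum-exp (adding a constant).
-/

open Finset Real Function

section LogSumExp

variable {κ : Type*} [Fintype κ]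

noncomputable def logSumExp (x : κ → ℝ) : ℝ := log (∑ j, exp (x j))

lemma sum_exp_sub_logSumExp [Nonempty κ] (x : κ → ℝ) :
    ∑ j, exp (x j - logSumExp x) = 1 := by
  have hpos : 0 < ∑ j, exp (x j) := sum_pos (fun j _ => exp_pos _) univ_nonempty
  simp_rw [exp_sub, ← sum_div, logSumExp, exp_log hpos, div_self hpos.ne']

lemma logSumExp_combo_lt [Nonempty κ] {x y : κ → ℝ} {j k : κ}
    (hjk : x j - y j ≠ x k - y k) {s t : ℝ} (hs : 0 < s) (ht : 0 < t) (hst : s + t = 1) :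
    logSumExp (s • x + t • y) < s * logSumExp x + t * logSumExp y := by
  -- Normalized so that `∑ exp x' = ∑ exp y' = 1`, the gap is `log ∑ exp (s x' + t y') < 0`.
  set x' : κ → ℝ := fun j => x j - logSumExp x
  set y' : κ → ℝ := fun j => y j - logSumExp y
  have hne : x' ≠ y' := fun h => hjk <| by
    have hj := congrFun h j
    have hk := congrFun h k
    simp only [x', y'] at hj hk
    linarith
  obtain ⟨l, hl⟩ := Function.ne_iff.mp hne
  have hsum : ∑ j, exp (s * x' j + t * y' j) < 1 := calc
    ∑ j, exp (s * x' j + t * y' j) < ∑ j, (s * exp (x' j) + t * exp (y' j)) := by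
      refine sum_lt_sum (fun j _ => ?_) ⟨l, mem_univ l, ?_⟩
      · simpa using convexOn_exp.2 (Set.mem_univ (x' j)) (Set.mem_univ (y' j)) hs.le ht.le hst
      · simpa using strictConvexOn_exp.2 (Set.mem_univ (x' l)) (Set.mem_univ (y' l)) hl hs ht hst
    _ = 1 := by
      have hx' : ∑ j, exp (x' j) = 1 := sum_exp_sub_logSumExp x
      have hy' : ∑ j, exp (y' j) = 1 := sum_exp_sub_logSumExp y
      rw [sum_add_distrib, ← mul_sum, ← mul_sum, hx', hy']
      linarith
  have hpos : 0 < ∑ j, exp (s * x' j + t * y' j) :=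
    sum_pos (fun j _ => exp_pos _) univ_nonempty
  have hsplit : ∀ j, exp ((s • x + t • y) j)
      = exp (s * logSumExp x + t * logSumExp y) * exp (s * x' j + t * y' j) := fun j => by
    rw [← exp_add]
    congr 1
    simp only [x', y', Pi.add_apply, Pi.smul_apply, smul_eq_mul]
    ring
  calc logSumExp (s • x + t • y)
      = s * logSumExp x + t * logSumExp y + log (∑ j, exp (s * x' j + t * y' j)) := by
        rw [logSumExp, sum_congr rfl fun j _ => hsplit j, ← mul_sum,
          log_mul (exp_pos _).ne' hpos.ne', log_exp]
    _ < s * logSumExp x + t * logSumExp y := by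
        linarith [log_neg hpos hsum]

end LogSumExp

lemma strictConvexOn_log_one_add_sum_exp {ι : Type*} [Fintype ι] :
    StrictConvexOn ℝ Set.univ fun u : ι → ℝ => log (1 + ∑ i, exp (u i)) := by
  have hlse : ∀ u : ι → ℝ, log (1 + ∑ i, exp (u i))
      = logSumExp fun j : Option ι => j.elim 0 u := fun u => by
    rw [logSumExp, Fintype.sum_option]; simp
  refine ⟨convex_univ, fun u _ v _ huv s t hs ht hst => ?_⟩
  obtain ⟨i, hi⟩ := Function.ne_iff.mp huv
  have hcombo : (fun j : Option ι => j.elim 0 (s • u + t • v))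
      = s • (fun j => j.elim 0 u) + t • fun j => j.elim 0 v := by
    ext (_ | j) <;> simp
  simp only [hlse, smul_eq_mul, hcombo]
  exact logSumExp_combo_lt (j := none) (k := some i) (by simpa [eq_comm, sub_eq_zero] using hi)
    hs ht hst

section WeightedSum

variable {E T : Type*} [AddCommGroup E] [Module ℝ E] [Fintype T]

lemma StrictConvexOn.sum_mul_apply {φ : E → ℝ} (hφ : StrictConvexOn ℝ Set.univ φ) {m : T → ℝ}
    (hm : ∀ K, 0 < m K) : StrictConvexOn ℝ Set.univ fun w : T → E => ∑ K, m K * φ (w K) := by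
  refine ⟨convex_univ, fun w _ w' _ hww' s t hs ht hst => ?_⟩
  obtain ⟨K₀, hK₀⟩ := Function.ne_iff.mp hww'
  calc ∑ K, m K * φ ((s • w + t • w') K)
      < ∑ K, m K * (s * φ (w K) + t * φ (w' K)) := by
        refine sum_lt_sum (fun K _ => ?_) ⟨K₀, mem_univ K₀, ?_⟩
        · exact mul_le_mul_of_nonneg_left
            (hφ.convexOn.2 (Set.mem_univ _) (Set.mem_univ _) hs.le ht.le hst) (hm K).le
        · exact mul_lt_mul_of_pos_left
            (hφ.2 (Set.mem_univ _) (Set.mem_univ _) hK₀ hs ht hst) (hm K₀)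
    _ = s * ∑ K, m K * φ (w K) + t * ∑ K, m K * φ (w' K) := by
        simp only [mul_sum, ← sum_add_distrib]
        exact sum_congr rfl fun K _ => by ring

end WeightedSum

section Product

variable {E F : Type*} [AddCommGroup E] [Module ℝ E] [AddCommGroup F] [Module ℝ F]

lemma StrictConvexOn.fst_add_snd {f : E → ℝ} {g : F → ℝ} (hf : StrictConvexOn ℝ Set.univ f)
    (hg : StrictConvexOn ℝ Set.univ g) :
    StrictConvexOn ℝ Set.univ fun p : E × F => f p.1 + g p.2 := by
  refine ⟨convex_univ, fun p _ q _ hpq s t hs ht hst => ?_⟩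
  have hf' := hf.convexOn.2 (Set.mem_univ p.1) (Set.mem_univ q.1) hs.le ht.le hst
  have hg' := hg.convexOn.2 (Set.mem_univ p.2) (Set.mem_univ q.2) hs.le ht.le hst
  simp only [Prod.fst_add, Prod.snd_add, Prod.smul_fst, Prod.smul_snd, smul_eq_mul] at hf' hg' ⊢
  rcases not_and_or.mp (Prod.ext_iff.not.mp hpq) with h | h
  · have hlt := hf.2 (Set.mem_univ _) (Set.mem_univ _) h hs ht hst
    simp only [smul_eq_mul] at hlt
    linarith
  · have hlt := hg.2 (Set.mem_univ _) (Set.mem_univ _) h hs ht hst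
    simp only [smul_eq_mul] at hlt
    linarith

lemma StrictConvexOn.comp_injective_linearMap {f : F → ℝ} (hf : StrictConvexOn ℝ Set.univ f)
    (A : E →ₗ[ℝ] F) (hA : Injective A) : StrictConvexOn ℝ Set.univ (f ∘ A) :=
  ⟨convex_univ, fun x _ y _ hxy s t hs ht hst => by
    simpa only [comp_apply, map_add, map_smul] using
      hf.2 (Set.mem_univ (A x)) (Set.mem_univ (A y)) (hA.ne hxy) hs ht hst⟩

end Product

lemma strictConvexOn_of_combo_eq {E : Type*} [AddCommGroup E] [Module ℝ E] {F q : E → ℝ}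
    (hq : ∀ d ≠ 0, 0 < q d)
    (hF : ∀ (x y : E) (s t : ℝ), s + t = 1 →
      F (s • x + t • y) = s * F x + t * F y - s * t * q (x - y)) :
    StrictConvexOn ℝ Set.univ F :=
  ⟨convex_univ, fun x _ y _ hxy s t hs ht hst => by
    rw [hF x y s t hst, smul_eq_mul, smul_eq_mul]
    have := mul_pos (mul_pos hs ht) (hq _ (sub_ne_zero.mpr hxy))
    linarith⟩

section DirichletEnergy

variable {T : Type*} [Fintype T] (α β : ℝ) (a : T → T → ℝ) (b : T → ℝ)

noncomputable def dirichletEnergy (g y : T → ℝ) : ℝ :=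
  α * ∑ K, ∑ L, a K L * (y K - y L) ^ 2 + β * ∑ K, b K * (y K - g K) ^ 2

lemma dirichletEnergy_combo (g x y : T → ℝ) {s t : ℝ} (hst : s + t = 1) :
    dirichletEnergy α β a b g (s • x + t • y) = s * dirichletEnergy α β a b g x
      + t * dirichletEnergy α β a b g y - s * t * dirichletEnergy α β a b 0 (x - y) := by
  obtain rfl : t = 1 - s := by linarith
  have hedge : ∀ K L, a K L * ((s • x + (1 - s) • y) K - (s • x + (1 - s) • y) L) ^ 2
      = s * (a K L * (x K - x L) ^ 2) + (1 - s) * (a K L * (y K - y L) ^ 2)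
        - s * (1 - s) * (a K L * ((x - y) K - (x - y) L) ^ 2) := fun K L => by
    simp only [Pi.add_apply, Pi.sub_apply, Pi.smul_apply, smul_eq_mul]; ring
  have hbdry : ∀ K, b K * ((s • x + (1 - s) • y) K - g K) ^ 2
      = s * (b K * (x K - g K) ^ 2) + (1 - s) * (b K * (y K - g K) ^ 2)
        - s * (1 - s) * (b K * ((x - y) K - (0 : T → ℝ) K) ^ 2) := fun K => by
    simp only [Pi.add_apply, Pi.sub_apply, Pi.smul_apply, Pi.zero_apply, smul_eq_mul]; ring
  simp only [dirichletEnergy, hedge, hbdry, sum_add_distrib, sum_sub_distrib, ← mul_sum]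
  ring

lemma dirichletEnergy_pos {α β : ℝ} (hα : 0 < α) (hβ : 0 < β) {a : T → T → ℝ} {b : T → ℝ}
    (ha : ∀ K L, 0 ≤ a K L) (hb : ∀ K, 0 ≤ b K)
    (hconn : ∀ K L : T, Relation.ReflTransGen (fun K L => 0 < a K L) K L)
    (hbpos : ∃ K, 0 < b K) {d : T → ℝ} (hd : d ≠ 0) :
    0 < dirichletEnergy α β a b 0 d := by
  obtain ⟨K₀, hK₀⟩ := hbpos
  have hedge : ∀ K L, 0 ≤ a K L * (d K - d L) ^ 2 := fun K L => mul_nonneg (ha K L) (sq_nonneg _)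
  have hbdry : ∀ K, 0 ≤ b K * d K ^ 2 := fun K => mul_nonneg (hb K) (sq_nonneg _)
  have hrow : ∀ K, 0 ≤ ∑ L, a K L * (d K - d L) ^ 2 := fun K => sum_nonneg fun L _ => hedge K L
  have hA := sum_nonneg fun K (_ : K ∈ univ) => hrow K
  have hB := sum_nonneg fun K (_ : K ∈ univ) => hbdry K
  by_contra! hle
  simp only [dirichletEnergy, Pi.zero_apply, sub_zero] at hle
  have hA0 : ∑ K, ∑ L, a K L * (d K - d L) ^ 2 = 0 := by nlinarith
  have hB0 : ∑ K, b K * d K ^ 2 = 0 := by nlinarith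
  have hflat : ∀ K L, 0 < a K L → d K = d L := fun K L hKL => by
    have hK := (sum_eq_zero_iff_of_nonneg fun K _ => hrow K).mp hA0 K (mem_univ K)
    have hKL0 := (sum_eq_zero_iff_of_nonneg fun L _ => hedge K L).mp hK L (mem_univ L)
    simpa [hKL.ne', sub_eq_zero] using hKL0
  have hdK₀ : d K₀ = 0 := by
    simpa [hK₀.ne'] using (sum_eq_zero_iff_of_nonneg fun K _ => hbdry K).mp hB0 K₀ (mem_univ K₀)
  refine hd (funext fun K => ?_)
  induction hconn K₀ K with
  | refl => exact hdK₀
  | tail _ hLK ih => exact (hflat _ _ hLK).symm.trans ih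

lemma strictConvexOn_dirichletEnergy {α β : ℝ} (hα : 0 < α) (hβ : 0 < β) {a : T → T → ℝ}
    {b : T → ℝ} (ha : ∀ K L, 0 ≤ a K L) (hb : ∀ K, 0 ≤ b K)
    (hconn : ∀ K L : T, Relation.ReflTransGen (fun K L => 0 < a K L) K L)
    (hbpos : ∃ K, 0 < b K) (g : T → ℝ) :
    StrictConvexOn ℝ Set.univ (dirichletEnergy α β a b g) :=
  strictConvexOn_of_combo_eq (fun _ hd => dirichletEnergy_pos hα hβ ha hb hconn hbpos hd)
    fun x y _ _ hst => dirichletEnergy_combo α β a b g x y hst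

end DirichletEnergy

section Coordinates

variable {T ι : Type*}

def shiftPotentials (z : ι → ℝ) : (T → ℝ) × (ι → ℝ) →ₗ[ℝ] (T → ℝ) × (T → ι → ℝ) where
  toFun p := (p.1, fun K i => p.2 i - z i * p.1 K)
  map_add' p q := Prod.ext rfl <| funext₂ fun K i => by
    simp only [Prod.snd_add, Prod.fst_add, Pi.add_apply, Prod.mk_add_mk]
    ring
  map_smul' r p := Prod.ext rfl <| funext₂ fun K i => by
    simp only [Prod.smul_snd, Prod.smul_fst, Pi.smul_apply, smul_eq_mul, RingHom.id_apply,
      Prod.smul_mk]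
    ring

lemma shiftPotentials_injective [Nonempty T] (z : ι → ℝ) :
    Injective (shiftPotentials (T := T) z) := fun p q hpq => by
  obtain ⟨hy, hξ⟩ := Prod.ext_iff.mp hpq
  simp only [shiftPotentials, LinearMap.coe_mk, AddHom.coe_mk] at hy hξ
  refine Prod.ext hy (funext fun i => ?_)
  have := congrFun (congrFun hξ (Classical.arbitrary T)) i
  rw [hy] at this
  linarith

def sourceFunctional [Fintype T] [Fintype ι] (m f : T → ℝ) (c : ι → T → ℝ) :
    (T → ℝ) × (ι → ℝ) →ₗ[ℝ] ℝ where
  toFun p := ∑ K, m K * (f K * p.1 K + ∑ i, p.2 i * c i K)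
  map_add' p q := by
    simp only [Prod.fst_add, Prod.snd_add, Pi.add_apply, add_mul, mul_add, sum_add_distrib]
    ring
  map_smul' r p := by
    simp only [Prod.smul_fst, Prod.smul_snd, Pi.smul_apply, smul_eq_mul, RingHom.id_apply,
      mul_assoc, ← mul_sum]
    rw [mul_sum]
    exact sum_congr rfl fun K _ => by ring

end Coordinates

theorem Psi_strictConvex_general
    (T : Type*) [Fintype T] [Nonempty T]
    (m : T → ℝ) (hm : ∀ K, 0 < m K)
    (a : T → T → ℝ)
    (hnn : ∀ K L, 0 ≤ a K L)
    (b : T → ℝ) (hb : ∀ K, 0 ≤ b K) (g : T → ℝ)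
    (lam : ℝ) (hlam : 0 < lam)
    (I : ℕ) (z : Fin I → ℝ)
    (f : T → ℝ) (c : Fin I → T → ℝ)
    (hconn : ∀ K L : T, Relation.ReflTransGen (fun K L => 0 < a K L) K L)
    (hbpos : ∃ K, 0 < b K)
    (Ψ : (T → ℝ) × (Fin I → ℝ) → ℝ)
    (hΨ : ∀ (y : T → ℝ) (ξ : Fin I → ℝ), Ψ (y, ξ) =
      lam ^ 2 / 4 * ∑ K, ∑ L, a K L * (y K - y L) ^ 2 +
      lam ^ 2 / 2 * ∑ K, b K * (y K - g K) ^ 2 +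
      (∑ K, m K * Real.log (1 + ∑ i, Real.exp (ξ i - z i * y K))) -
      ∑ K, m K * (f K * y K + ∑ i, ξ i * c i K)) :
    StrictConvexOn ℝ Set.univ Ψ ∧
    ∀ p q : (T → ℝ) × (Fin I → ℝ),
      IsMinOn Ψ Set.univ p → IsMinOn Ψ Set.univ q → p = q := by
  have hE := strictConvexOn_dirichletEnergy (by positivity : 0 < lam ^ 2 / 4)
    (by positivity : 0 < lam ^ 2 / 2) hnn hb hconn hbpos g
  have hΦ := (strictConvexOn_log_one_add_sum_exp (ι := Fin I)).sum_mul_apply hm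
  have hΨ' : Ψ = (fun p => dirichletEnergy (lam ^ 2 / 4) (lam ^ 2 / 2) a b g p.1
      + ∑ K, m K * log (1 + ∑ i, exp (p.2 K i))) ∘ shiftPotentials z - sourceFunctional m f c := by
    funext ⟨y, ξ⟩
    rw [hΨ]
    rfl
  have hsc : StrictConvexOn ℝ Set.univ Ψ := hΨ' ▸
    ((hE.fst_add_snd hΦ).comp_injective_linearMap _ (shiftPotentials_injective z)).sub_concaveOn
      ((sourceFunctional m f c).concaveOn convex_univ)
  exact ⟨hsc, fun p q hp hq => hsc.eq_of_isMinOn hp hq (Set.mem_univ p) (Set.mem_univ q)⟩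

/-- Strict convexity of the discrete steady-state functional `Ψ` (assuming the
mesh graph is connected and at least one Dirichlet weight is positive); in
particular `Ψ` admits at most one minimizer. -/
theorem Psi_strictConvex
    (T : Type*) [Fintype T] [Nonempty T]
    (m : T → ℝ) (hm : ∀ K, 0 < m K)
    (a : T → T → ℝ) (hsym : ∀ K L, a K L = a L K)
    (hnn : ∀ K L, 0 ≤ a K L) (hdiag : ∀ K, a K K = 0)
    (b : T → ℝ) (hb : ∀ K, 0 ≤ b K) (g : T → ℝ)
    (lam : ℝ) (hlam : 0 < lam)
    (I : ℕ) (hI : 1 ≤ I) (z : Fin I → ℝ)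
    (f : T → ℝ) (c : Fin I → T → ℝ)
    (hconn : ∀ K L : T, Relation.ReflTransGen (fun K L => 0 < a K L) K L)
    (hbpos : ∃ K, 0 < b K)
    (Ψ : (T → ℝ) × (Fin I → ℝ) → ℝ)
    (hΨ : ∀ (y : T → ℝ) (ξ : Fin I → ℝ), Ψ (y, ξ) =
      lam ^ 2 / 4 * ∑ K, ∑ L, a K L * (y K - y L) ^ 2 +
      lam ^ 2 / 2 * ∑ K, b K * (y K - g K) ^ 2 +
      (∑ K, m K * Real.log (1 + ∑ i, Real.exp (ξ i - z i * y K))) -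
      ∑ K, m K * (f K * y K + ∑ i, ξ i * c i K)) :
    StrictConvexOn ℝ Set.univ Ψ ∧
    ∀ p q : (T → ℝ) × (Fin I → ℝ),
      IsMinOn Ψ Set.univ p → IsMinOn Ψ Set.univ q → p = q :=
  Psi_strictConvex_general T m hm a hnn b hb g lam hlam I z f c hconn hbpos Ψ hΨ
end

section
/- A pair (y, ξ) ∈ ℝ^𝒯 × ℝ^I is a critical point of Ψ (i.e., all partial derivatives of Ψ vanish at (y, ξ)) if and only if: (a) for every K ∈ 𝒯, λ²·(Σ_{L} a(K,L)·(y_K − y_L) + b_K·(y_K − g_K)) + m_K·r(y_K, ξ) = m_K·f(K), and (b) for every 1 ≤ i ≤ I, Σ_K m_K·v_i(y_K, ξ) = Σ_K m_K·c_i(K). -/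
/-!
Every term of `Ψ` is a sum over cells of a function of one coordinate `y K`, except the
Dirichlet form `¼ Σ a(K,L) (y_K - y_L)²`, whose partial derivative in `y_k` is
`½ Σ_L (a(k,L) + a(L,k)) (y_k - y_L)` and collapses to `Σ_L a(k,L) (y_k - y_L)` by symmetry.
The log-partition function `log (1 + Σ exp (ξ_i - z_i y))` has derivative `r(y, ξ)` in `y` and
`v_i(y, ξ)` in `ξ_i`. So the partial derivatives of `Ψ` are exactly the differences of the two
sides of (a) and (b).
-/

open Finset Function

section Partial

variable {ι : Type*}

theorem hasDerivAt_update_apply [DecidableEq ι] (x : ι → ℝ) (k j : ι) :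
    HasDerivAt (fun t => update x k t j) ((Pi.single k 1 : ι → ℝ) j) (x k) :=
  hasDerivAt_pi.1 (hasDerivAt_update x k (x k)) j

variable [Fintype ι]

theorem HasDerivAt.sum_apply_update [DecidableEq ι] {φ : ι → ℝ → ℝ} {x : ι → ℝ} {k : ι} {d : ℝ}
    (h : HasDerivAt (φ k) d (x k)) :
    HasDerivAt (fun t => ∑ j, φ j (update x k t j)) d (x k) := by
  have e : (fun t => ∑ j, φ j (update x k t j)) =
      fun t => φ k t + ∑ j ∈ univ.erase k, φ j (x j) := by
    funext t
    rw [← add_sum_erase _ _ (mem_univ k), update_self]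
    congr 1
    exact sum_congr rfl fun j hj => by rw [update_of_ne (ne_of_mem_erase hj)]
  rw [e]
  exact h.add_const _

theorem hasDerivAt_sum_sum_mul_sq_sub_update [DecidableEq ι] (a : ι → ι → ℝ) (x : ι → ℝ) (k : ι) :
    HasDerivAt (fun t => ∑ i, ∑ j, a i j * (update x k t i - update x k t j) ^ 2)
      (2 * ∑ j, (a k j + a j k) * (x k - x j)) (x k) := by
  have h := HasDerivAt.fun_sum fun i (_ : i ∈ univ) => HasDerivAt.fun_sum fun j (_ : j ∈ univ) =>
    (((hasDerivAt_update_apply x k i).fun_sub (hasDerivAt_update_apply x k j)).fun_pow 2).const_mul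
      (a i j)
  refine h.congr_deriv ?_
  have hsplit : ∀ i j, a i j * (↑2 * (update x k (x k) i - update x k (x k) j) ^ (2 - 1) *
      ((Pi.single k 1 : ι → ℝ) i - (Pi.single k 1 : ι → ℝ) j)) =
      (Pi.single k 1 : ι → ℝ) i * (2 * a i j * (x i - x j)) +
      (Pi.single k 1 : ι → ℝ) j * (2 * a i j * (x j - x i)) := by
    intro i j; simp only [update_eq_self]; ring
  refine (sum_congr rfl fun i _ => sum_congr rfl fun j _ => hsplit i j).trans ?_
  simp only [sum_add_distrib]
  rw [sum_comm (f := fun i j => (Pi.single k 1 : ι → ℝ) j * (2 * a i j * (x j - x i)))]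
  simp only [← mul_sum]
  simp only [Pi.single_apply, ite_mul, one_mul, zero_mul, sum_ite_eq', mem_univ, if_true]
  rw [← sum_add_distrib, mul_sum]
  exact sum_congr rfl fun j _ => by ring

theorem HasDerivAt.log_one_add_sum_exp {u : ι → ℝ → ℝ} {u' : ι → ℝ} {t : ℝ}
    (hu : ∀ j, HasDerivAt (u j) (u' j) t) :
    HasDerivAt (fun s => Real.log (1 + ∑ j, Real.exp (u j s)))
      ((∑ j, Real.exp (u j t) * u' j) / (1 + ∑ j, Real.exp (u j t))) t :=
  ((HasDerivAt.fun_sum fun j _ => (hu j).exp).const_add 1).log (by positivity)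

theorem HasDerivAt.hasDerivAt_zero_iff {f : ℝ → ℝ} {f' x : ℝ} (h : HasDerivAt f f' x) :
    HasDerivAt f 0 x ↔ f' = 0 :=
  ⟨h.unique, fun e => e ▸ h⟩

end Partial

section Psi

variable {T ι : Type*} [Fintype T] [Fintype ι]

noncomputable def logPartition (z : ι → ℝ) (x : ℝ) (ξ : ι → ℝ) : ℝ :=
  Real.log (1 + ∑ i, Real.exp (ξ i - z i * x))

noncomputable def concentration (z : ι → ℝ) (x : ℝ) (ξ : ι → ℝ) (i : ι) : ℝ :=
  Real.exp (ξ i - z i * x) / (1 + ∑ j, Real.exp (ξ j - z j * x))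

noncomputable def chargeDensity (z : ι → ℝ) (x : ℝ) (ξ : ι → ℝ) : ℝ :=
  -∑ i, z i * concentration z x ξ i

theorem hasDerivAt_logPartition (z ξ : ι → ℝ) (x : ℝ) :
    HasDerivAt (fun t => logPartition z t ξ) (chargeDensity z x ξ) x := by
  refine (HasDerivAt.log_one_add_sum_exp fun i =>
    ((hasDerivAt_id' x).const_mul (z i)).const_sub (ξ i)).congr_deriv ?_
  simp only [chargeDensity, concentration, sum_div, ← sum_neg_distrib]
  exact sum_congr rfl fun i _ => by ring

theorem hasDerivAt_logPartition_update [DecidableEq ι] (z ξ : ι → ℝ) (x : ℝ) (i : ι) :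
    HasDerivAt (fun s => logPartition z x (update ξ i s)) (concentration z x ξ i) (ξ i) := by
  refine (HasDerivAt.log_one_add_sum_exp fun j =>
    (hasDerivAt_update_apply ξ i j).sub_const (z j * x)).congr_deriv ?_
  simp only [update_eq_self, Pi.single_apply, mul_ite, mul_one, mul_zero, sum_ite_eq', mem_univ,
    if_true, concentration]

noncomputable def Psi (lam : ℝ) (a : T → T → ℝ) (b g m f : T → ℝ) (z : ι → ℝ) (c : ι → T → ℝ)
    (y : T → ℝ) (ξ : ι → ℝ) : ℝ :=
  lam ^ 2 / 4 * ∑ K, ∑ L, a K L * (y K - y L) ^ 2 + lam ^ 2 / 2 * ∑ K, b K * (y K - g K) ^ 2 +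
    (∑ K, m K * logPartition z (y K) ξ) - ∑ K, m K * (f K * y K + ∑ i, ξ i * c i K)

variable (lam : ℝ) {a : T → T → ℝ} (b g m f : T → ℝ) (z : ι → ℝ) (c : ι → T → ℝ)
  (y : T → ℝ) (ξ : ι → ℝ)

theorem hasDerivAt_Psi_update_left [DecidableEq T] (ha : ∀ K L, a K L = a L K) (k : T) :
    HasDerivAt (fun t => Psi lam a b g m f z c (update y k t) ξ)
      (lam ^ 2 * (∑ L, a k L * (y k - y L) + b k * (y k - g k)) +
        m k * chargeDensity z (y k) ξ - m k * f k) (y k) := by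
  have hQ := (hasDerivAt_sum_sum_mul_sq_sub_update a y k).const_mul (lam ^ 2 / 4)
  have hB := (HasDerivAt.sum_apply_update (φ := fun K t => b K * (t - g K) ^ 2)
    ((((hasDerivAt_id' (y k)).sub_const (g k)).fun_pow 2).const_mul (b k))).const_mul (lam ^ 2 / 2)
  have hC := HasDerivAt.sum_apply_update (φ := fun K t => m K * logPartition z t ξ)
    ((hasDerivAt_logPartition z ξ (y k)).const_mul (m k))
  have hD := HasDerivAt.sum_apply_update (φ := fun K t => m K * (f K * t + ∑ i, ξ i * c i K))
    ((((hasDerivAt_id' (y k)).const_mul (f k)).add_const (∑ i, ξ i * c i k)).const_mul (m k))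
  refine (((hQ.add hB).add hC).sub hD).congr_deriv ?_
  have hsymm : ∑ j, (a k j + a j k) * (y k - y j) = 2 * ∑ j, a k j * (y k - y j) := by
    simp only [ha _ k, ← two_mul, mul_sum, mul_assoc]
  rw [hsymm]
  ring

theorem hasDerivAt_Psi_update_right [DecidableEq ι] (i : ι) :
    HasDerivAt (fun s => Psi lam a b g m f z c y (update ξ i s))
      (∑ K, m K * concentration z (y K) ξ i - ∑ K, m K * c i K) (ξ i) := by
  have hC := HasDerivAt.fun_sum fun K (_ : K ∈ univ) =>
    (hasDerivAt_logPartition_update z ξ (y K) i).const_mul (m K)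
  have hD := HasDerivAt.fun_sum fun K (_ : K ∈ univ) =>
    ((HasDerivAt.sum_apply_update (φ := fun j s => s * c j K)
      ((hasDerivAt_id' (ξ i)).mul_const (c i K))).const_add (f K * y K)).const_mul (m K)
  refine (((hasDerivAt_const _ _).add hC).sub hD).congr_deriv ?_
  simp only [zero_add, one_mul]

end Psi

theorem Psi_critical_point_iff_general
    (T : Type*) [Fintype T] [DecidableEq T]
    (m : T → ℝ)
    (a : T → T → ℝ) (hsym : ∀ K L, a K L = a L K)
    (b : T → ℝ) (g : T → ℝ)
    (lam : ℝ)
    (I : ℕ) (z : Fin I → ℝ)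
    (f : T → ℝ) (c : Fin I → T → ℝ)
    -- the functions v and r
    (v : ℝ → (Fin I → ℝ) → Fin I → ℝ)
    (hv : ∀ y ξ i, v y ξ i =
      Real.exp (ξ i - z i * y) / (1 + ∑ j, Real.exp (ξ j - z j * y)))
    (r : ℝ → (Fin I → ℝ) → ℝ)
    (hr : ∀ y ξ, r y ξ = -∑ i, z i * v y ξ i)
    -- the functional Ψ
    (Ψ : (T → ℝ) → (Fin I → ℝ) → ℝ)
    (hΨ : ∀ (y : T → ℝ) (ξ : Fin I → ℝ), Ψ y ξ =
      lam ^ 2 / 4 * ∑ K, ∑ L, a K L * (y K - y L) ^ 2 +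
      lam ^ 2 / 2 * ∑ K, b K * (y K - g K) ^ 2 +
      (∑ K, m K * Real.log (1 + ∑ i, Real.exp (ξ i - z i * y K))) -
      ∑ K, m K * (f K * y K + ∑ i, ξ i * c i K))
    (y : T → ℝ) (ξ : Fin I → ℝ) :
    ((∀ K, HasDerivAt (fun t => Ψ (Function.update y K t) ξ) 0 (y K)) ∧
     (∀ i, HasDerivAt (fun t => Ψ y (Function.update ξ i t)) 0 (ξ i))) ↔
    ((∀ K, lam ^ 2 * ((∑ L, a K L * (y K - y L)) + b K * (y K - g K)) +
        m K * r (y K) ξ = m K * f K) ∧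
     (∀ i, ∑ K, m K * v (y K) ξ i = ∑ K, m K * c i K)) := by
  obtain rfl : v = concentration z := funext₃ hv
  obtain rfl : r = chargeDensity z := funext₂ hr
  obtain rfl : Ψ = Psi lam a b g m f z c := funext₂ hΨ
  simp only [(hasDerivAt_Psi_update_left lam b g m f z c y ξ hsym _).hasDerivAt_zero_iff,
    (hasDerivAt_Psi_update_right lam b g m f z c y ξ _).hasDerivAt_zero_iff, sub_eq_zero]

/-- A pair `(y, ξ)` is a critical point of `Ψ` (all partial derivatives vanish)
iff `y` solves the discrete modified Poisson–Boltzmann equation and the mass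
constraints `Σ_K m_K·vᵢ(y_K,ξ) = Σ_K m_K·cᵢ(K)` hold. -/
theorem Psi_critical_point_iff
    (T : Type*) [Fintype T] [Nonempty T] [DecidableEq T]
    (m : T → ℝ) (hm : ∀ K, 0 < m K)
    (a : T → T → ℝ) (hsym : ∀ K L, a K L = a L K)
    (hnn : ∀ K L, 0 ≤ a K L) (hdiag : ∀ K, a K K = 0)
    (b : T → ℝ) (hb : ∀ K, 0 ≤ b K) (g : T → ℝ)
    (lam : ℝ) (hlam : 0 < lam)
    (I : ℕ) (hI : 1 ≤ I) (z : Fin I → ℝ)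
    (f : T → ℝ) (c : Fin I → T → ℝ)
    -- the functions v and r
    (v : ℝ → (Fin I → ℝ) → Fin I → ℝ)
    (hv : ∀ y ξ i, v y ξ i =
      Real.exp (ξ i - z i * y) / (1 + ∑ j, Real.exp (ξ j - z j * y)))
    (r : ℝ → (Fin I → ℝ) → ℝ)
    (hr : ∀ y ξ, r y ξ = -∑ i, z i * v y ξ i)
    -- the functional Ψ
    (Ψ : (T → ℝ) → (Fin I → ℝ) → ℝ)
    (hΨ : ∀ (y : T → ℝ) (ξ : Fin I → ℝ), Ψ y ξ =
      lam ^ 2 / 4 * ∑ K, ∑ L, a K L * (y K - y L) ^ 2 +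
      lam ^ 2 / 2 * ∑ K, b K * (y K - g K) ^ 2 +
      (∑ K, m K * Real.log (1 + ∑ i, Real.exp (ξ i - z i * y K))) -
      ∑ K, m K * (f K * y K + ∑ i, ξ i * c i K))
    (y : T → ℝ) (ξ : Fin I → ℝ) :
    ((∀ K, HasDerivAt (fun t => Ψ (Function.update y K t) ξ) 0 (y K)) ∧
     (∀ i, HasDerivAt (fun t => Ψ y (Function.update ξ i t)) 0 (ξ i))) ↔
    ((∀ K, lam ^ 2 * ((∑ L, a K L * (y K - y L)) + b K * (y K - g K)) +
        m K * r (y K) ξ = m K * f K) ∧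
     (∀ i, ∑ K, m K * v (y K) ξ i = ∑ K, m K * c i K)) :=
  Psi_critical_point_iff_general T m a hsym b g lam I z f c v hv r hr Ψ hΨ y ξ
end
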